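/- arXiv:1006.4658 — 4 statements merged into one kernel-verified Lean document; each statement's English description precedes it below -/
import Mathlib

section
/- Let A ∈ 𝔅(n) be a Bott matrix, k ∈ {1,…,n}, and B = Φ_k(A). Let a_1,…,a_n and b_1,…,b_n be the involutions of T^n associated with A and B respectively, and let f̃_k : T^n → T^n be the map (z_1,…,z_n) ↦ (z_1,…,z_{k−1}, √−1·z_k, z_{k+1},…,z_n). Then for every i ∈ {1,…,n} and every z ∈ T^n, f̃_k(b_i(z)) = (a_i ∘ a_k^{A^i_k})(f̃_k(z)), where a_k^0 is the identity and a_k^1 = a_k. -/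
open Matrix

/-- A Bott matrix: conjugate by a permutation matrix to a strictly upper
triangular binary matrix. -/
def IsBott {n : ℕ} (A : Matrix (Fin n) (Fin n) (ZMod 2)) : Prop :=
  ∃ (σ : Equiv.Perm (Fin n)) (B : Matrix (Fin n) (Fin n) (ZMod 2)),
    (∀ i j : Fin n, j ≤ i → B i j = 0) ∧
    A = σ.permMatrix (ZMod 2) * B * (σ⁻¹).permMatrix (ZMod 2)

/-- (Op2) `Φ_k(A)_j = A_j + A^k_j A_k`. -/
def Phi2 {n : ℕ} (k : Fin n) (A : Matrix (Fin n) (Fin n) (ZMod 2)) :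
    Matrix (Fin n) (Fin n) (ZMod 2) :=
  fun i j => A i j + A k j * A i k

/-- `z(a)`: `z` if `a = 0` and the complex conjugate `z̄` if `a = 1`. -/
noncomputable def conjPow (a : ZMod 2) (z : ℂ) : ℂ :=
  if a = 0 then z else (starRingEnd ℂ) z

/-- The involution `a_i` of `T^n ⊆ ℂ^n` associated with a binary matrix `A`. -/
noncomputable def aMap {n : ℕ} (A : Matrix (Fin n) (Fin n) (ZMod 2)) (i : Fin n)
    (z : Fin n → ℂ) : Fin n → ℂ :=
  fun j => if j = i then -z i else conjPow (A i j) (z j)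

/-- The affine automorphism `f̃_k` of `T^n`:
`(z_1,…,z_n) ↦ (z_1,…,z_{k−1}, √-1·z_k, z_{k+1},…,z_n)`. -/
noncomputable def ftildeK {n : ℕ} (k : Fin n) (z : Fin n → ℂ) : Fin n → ℂ :=
  fun j => if j = k then Complex.I * z k else z j

/-!
Everything is checked coordinatewise. If `A^i_k = 0` then `b_i = a_i`, and `a_i` fixes or negates
the `k`-th coordinate, so it commutes with `f̃_k`. If `A^i_k = 1` then the Bott property gives
`A^k_k = A^k_i = 0`; the row `B_i = A_i + A_k` acts by composing the conjugations of `a_k` and `a_i`,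
and on the `k`-th coordinate `conj(-√-1·z) = √-1·z̄`.
-/

theorem Equiv.Perm.permMatrix_mul_mul_permMatrix_inv_apply {ι R : Type*} [Fintype ι]
    [DecidableEq ι] [NonAssocSemiring R] (σ : Equiv.Perm ι) (B : Matrix ι ι R) (a b : ι) :
    (σ.permMatrix R * B * (σ⁻¹).permMatrix R) a b = B (σ a) (σ b) := by
  rw [Equiv.Perm.permMatrix, Equiv.Perm.permMatrix, PEquiv.toMatrix_toPEquiv_mul,
    PEquiv.mul_toMatrix_toPEquiv]
  simp [Equiv.Perm.inv_def]

namespace IsBott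

variable {n : ℕ} {A : Matrix (Fin n) (Fin n) (ZMod 2)}

theorem apply_eq_zero_of_apply_ne_zero (hA : IsBott A) {i j : Fin n} (h : A i j ≠ 0) :
    A j i = 0 := by
  obtain ⟨σ, B, hB, rfl⟩ := hA
  simp only [Equiv.Perm.permMatrix_mul_mul_permMatrix_inv_apply] at h ⊢
  exact hB _ _ (le_of_not_ge fun hle => h (hB _ _ hle))

theorem apply_self (hA : IsBott A) (i : Fin n) : A i i = 0 :=
  not_not.mp fun h => h (hA.apply_eq_zero_of_apply_ne_zero h)

end IsBott

theorem conjPow_add (a b : ZMod 2) (z : ℂ) :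
    conjPow (a + b) z = conjPow a (conjPow b z) := by
  have two_cases : ∀ x : ZMod 2, x = 0 ∨ x = 1 := by decide
  rcases two_cases a with rfl | rfl <;> rcases two_cases b with rfl | rfl <;>
    simp [conjPow, show (1 + 1 : ZMod 2) = 0 from rfl]

section Equivariance

variable {n : ℕ} (A : Matrix (Fin n) (Fin n) (ZMod 2)) {i k : Fin n} (z : Fin n → ℂ)

theorem aMap_Phi2_of_apply_eq_zero (hik : A i k = 0) : aMap (Phi2 k A) i = aMap A i := by
  funext z j
  simp [aMap, Phi2, hik]

theorem ftildeK_aMap_of_apply_eq_zero (hik : A i k = 0) :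
    ftildeK k (aMap A i z) = aMap A i (ftildeK k z) := by
  ext j
  by_cases hjk : j = k
  · subst hjk
    by_cases hji : j = i
    · subst hji
      simp [ftildeK, aMap]
    · simp [ftildeK, aMap, hji, hik, conjPow]
  · by_cases hji : j = i
    · subst hji
      simp [ftildeK, aMap, hjk]
    · simp [ftildeK, aMap, hjk, hji]

theorem ftildeK_aMap_Phi2_of_apply_eq_one (hik : A i k = 1) (hkk : A k k = 0)
    (hki : A k i = 0) :
    ftildeK k (aMap (Phi2 k A) i z) = aMap A i (aMap A k (ftildeK k z)) := by
  have hne : i ≠ k := by rintro rfl; simp [hik] at hkk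
  ext j
  by_cases hjk : j = k
  · subst hjk
    simp [ftildeK, aMap, Phi2, conjPow, hik, hkk, hne.symm]
  · by_cases hji : j = i
    · subst hji
      simp [ftildeK, aMap, conjPow, hjk, hki]
    · simp only [ftildeK, aMap, Phi2, if_neg hjk, if_neg hji, hik, mul_one, conjPow_add]

end Equivariance

/-- Equivariance of `f̃_k` for the operation (Op2): with `B = Φ_k(A)` and the
involutions `b_i` of `B`, one has `f̃_k(b_i(z)) = (a_i ∘ a_k^{A^i_k})(f̃_k(z))`
for all `i` and all `z ∈ T^n`. -/
theorem ftildeK_equivariant {n : ℕ} (A : Matrix (Fin n) (Fin n) (ZMod 2))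
    (hA : IsBott A) (k : Fin n) :
    ∀ (i : Fin n) (z : Fin n → ℂ), (∀ j, ‖z j‖ = 1) →
      ftildeK k (aMap (Phi2 k A) i z) =
        if A i k = 0 then aMap A i (ftildeK k z)
        else aMap A i (aMap A k (ftildeK k z)) := by
  intro i z _
  split_ifs with hik
  · rw [aMap_Phi2_of_apply_eq_zero A hik]
    exact ftildeK_aMap_of_apply_eq_zero A z hik
  · have hik : A i k = 1 := Fin.eq_one_of_ne_zero _ hik
    exact ftildeK_aMap_Phi2_of_apply_eq_one A z hik (hA.apply_self k)
      (hA.apply_eq_zero_of_apply_ne_zero (by simp [hik]))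
end

section
/- If D is an indecomposable acyclic digraph with at least two vertices, then the 𝔽₂-rank of the submatrix A_D[L₀(D), V(D)∖L₀(D)] equals |L₀(D)|, the number of roots of D. -/
/-- Local complementation at `v`: arc set `A(D) Δ (N⁻_D(v) × N⁺_D(v))`. -/
def localComp {V : Type*} (R : V → V → Prop) (v : V) : V → V → Prop :=
  fun x y => Xor' (R x y) (R x v ∧ R v y)

/-- The slide on `uv`: arc set `A(D) Δ {(v,w) : w ∈ N⁺_D(u)}`. -/
def slideRel {V : Type*} (R : V → V → Prop) (u v : V) : V → V → Prop :=
  fun x y => Xor' (R x y) (x = v ∧ R u y)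

/-- A digraph is acyclic if it has no directed cycle. -/
def AcyclicRel {V : Type*} (R : V → V → Prop) : Prop :=
  ∀ v : V, ¬ Relation.TransGen R v v

/-- One graph operation: a local complementation or a legal slide. -/
inductive GStep {V : Type*} : (V → V → Prop) → (V → V → Prop) → Prop
  | lc (R : V → V → Prop) (v : V) : GStep R (localComp R v)
  | sl (R : V → V → Prop) (u v : V) (h : u ≠ v) (hN : ∀ w, R w u ↔ R w v) :
      GStep R (slideRel R u v)

/-- Bott equivalence of digraphs. -/
def BottEquivD {V : Type*} {W : Type*} (R : V → V → Prop) (S : W → W → Prop) : Prop :=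
  ∃ R' : V → V → Prop, Relation.ReflTransGen GStep R R' ∧
    ∃ e : V ≃ W, ∀ a b : V, R' a b ↔ S (e a) (e b)

/-- A digraph is connected if its underlying undirected graph is connected. -/
def ConnectedRel {V : Type*} (R : V → V → Prop) : Prop :=
  ∀ a b : V, Relation.ReflTransGen (fun x y => R x y ∨ R y x) a b

/-- An acyclic digraph is indecomposable if every acyclic digraph Bott
equivalent to it is connected. -/
def IndecompD {V : Type*} [Fintype V] (R : V → V → Prop) : Prop :=
  ∀ (m : ℕ) (S : Fin m → Fin m → Prop), BottEquivD R S → ConnectedRel S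

open Classical in
/-- The row of the adjacency matrix of `R` indexed by `u` over `𝔽₂`. -/
noncomputable def rowVec {V : Type*} (R : V → V → Prop) (u : V) : V → ZMod 2 :=
  fun y => if R u y then 1 else 0

/-- The `𝔽₂`-row space of the submatrix `A_R[L₀(R), V∖L₀(R)]` (rows indexed by
the roots of `R`; columns at roots vanish automatically). -/
noncomputable def rootRowSpace {V : Type*} (R : V → V → Prop) :
    Submodule (ZMod 2) (V → ZMod 2) :=
  Submodule.span (ZMod 2) {f | ∃ u : V, (∀ w, ¬ R w u) ∧ f = rowVec R u}

/-!
Root rows are linearly independent: if the rows of a set `S` of roots summed to zero over `𝔽₂`,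
sliding every other root of `S` onto one `u₀ ∈ S` would be legal (all roots share the empty
in-neighbourhood) and would add their rows to the row of `u₀`. This empties the out-neighbourhood
of `u₀` while keeping it a root, so `u₀` becomes isolated in a Bott equivalent digraph, which is
impossible for an indecomposable digraph with at least two vertices.
-/

section Slides

variable {V : Type*} (R : V → V → Prop)

lemma slideRel_iff_of_ne {u v x : V} (hx : x ≠ v) (y : V) : slideRel R u v x y ↔ R x y := by
  show Xor _ _ ↔ _
  simp [hx, Xor]

lemma slideRel_self_iff (u v y : V) : slideRel R u v v y ↔ Xor (R v y) (R u y) := by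
  show Xor _ _ ↔ _
  simp

lemma not_slideRel_of_root {w : V} (hw : ∀ x, ¬ R x w) (u v x : V) : ¬ slideRel R u v x w := by
  show ¬ Xor _ _
  simp [hw, Xor]

lemma rowVec_slideRel_self (u v : V) :
    rowVec (slideRel R u v) v = rowVec R v + rowVec R u := by
  funext y
  by_cases hv : R v y <;> by_cases hu : R u y <;> simp [rowVec, slideRel_self_iff, Xor, hv, hu]
  rfl

lemma exists_reachable_rowVec_eq_add_sum {u₀ : V} (hu₀ : ∀ x, ¬ R x u₀)
    (T : Finset {v : V // ∀ w, ¬ R w v}) (hT : ∀ u ∈ T, u.1 ≠ u₀) :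
    ∃ R', Relation.ReflTransGen GStep R R' ∧ (∀ w, (∀ x, ¬ R x w) → ∀ x, ¬ R' x w) ∧
      rowVec R' u₀ = rowVec R u₀ + ∑ u ∈ T, rowVec R u.1 ∧
      ∀ x ≠ u₀, ∀ y, R' x y ↔ R x y := by
  classical
  induction T using Finset.induction_on with
  | empty => exact ⟨R, .refl, fun w hw => hw, by simp, fun _ _ _ => Iff.rfl⟩
  | insert a T ha ih =>
    obtain ⟨R', hsteps, hroots, hrow, hother⟩ :=
      ih fun u hu => hT u (Finset.mem_insert_of_mem hu)
    have ha₀ : a.1 ≠ u₀ := hT a (Finset.mem_insert_self a T)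
    have hN : ∀ w, R' w a ↔ R' w u₀ := fun w =>
      iff_of_false (hroots a a.2 w) (hroots u₀ hu₀ w)
    refine ⟨slideRel R' a u₀, hsteps.tail (.sl R' a u₀ ha₀ hN),
      fun w hw => not_slideRel_of_root R' (hroots w hw) a u₀, ?_,
      fun x hx y => (slideRel_iff_of_ne R' hx y).trans (hother x hx y)⟩
    have hrow_a : rowVec R' a = rowVec R a := funext fun y => by
      simp only [rowVec, hother a ha₀ y]
    rw [rowVec_slideRel_self, hrow, hrow_a, Finset.sum_insert ha]
    abel

end Slides

lemma ConnectedRel.eq_of_isolated {V : Type*} {R : V → V → Prop} (hR : ConnectedRel R) {v : V}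
    (hout : ∀ y, ¬ R v y) (hin : ∀ x, ¬ R x v) (w : V) : w = v := by
  induction hR v w with
  | refl => rfl
  | tail _ hstep ih =>
    subst ih
    rcases hstep with h | h
    exacts [absurd h (hout _), absurd h (hin _)]

lemma IndecompD.connectedRel_of_reachable {V : Type*} [Fintype V] {D R : V → V → Prop}
    (hind : IndecompD D) (hDR : Relation.ReflTransGen GStep D R) : ConnectedRel R := by
  let e := Fintype.equivFin V
  have hconn := hind _ (fun a b => R (e.symm a) (e.symm b)) ⟨R, hDR, e, fun a b => by simp⟩
  intro a b
  simpa [Function.onFun] using Relation.ReflTransGen.lift (p := fun x y => R x y ∨ R y x) e.symm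
    (fun _ _ h => h) _ _ (hconn (e a) (e b))

lemma ZMod.two_smul_eq_ite {M : Type*} [AddCommGroup M] [Module (ZMod 2) M] (a : ZMod 2) (x : M) :
    a • x = if a = 0 then 0 else x := by
  rcases (by decide : ∀ a : ZMod 2, a = 0 ∨ a = 1) a with rfl | rfl <;> simp

lemma linearIndependent_rowVec_roots {V : Type*} [Fintype V] (hcard : 2 ≤ Fintype.card V)
    {D : V → V → Prop} (hind : IndecompD D) :
    LinearIndependent (ZMod 2) fun u : {v : V // ∀ w, ¬ D w v} => rowVec D u.1 := by
  classical
  rw [Fintype.linearIndependent_iff]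
  intro g hg
  by_contra! hne
  obtain ⟨u₀, hu₀⟩ := hne
  set S := Finset.univ.filter fun u => g u ≠ 0
  have hsum : ∑ u ∈ S, rowVec D u.1 = 0 := by
    rw [Finset.sum_filter, ← hg]
    refine Finset.sum_congr rfl fun u _ => ?_
    rw [ZMod.two_smul_eq_ite]
    split_ifs <;> simp_all
  have hu₀S : u₀ ∈ S := by simp [S, hu₀]
  obtain ⟨R, hsteps, hroots, hrow, -⟩ :=
    exists_reachable_rowVec_eq_add_sum D u₀.2 (S.erase u₀) fun u hu h =>
      (Finset.mem_erase.mp hu).1 (Subtype.ext h)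
  have hout : ∀ y, ¬ R u₀ y := by
    intro y hy
    have hrow0 : rowVec R u₀ = 0 := by
      rw [hrow, Finset.add_sum_erase S (fun u => rowVec D u.1) hu₀S, hsum]
    simpa [rowVec, hy] using congrFun hrow0 y
  obtain ⟨b, hb⟩ := Fintype.exists_ne_of_one_lt_card hcard u₀.1
  exact hb ((hind.connectedRel_of_reachable hsteps).eq_of_isolated hout (hroots u₀ u₀.2) b)

lemma rootRowSpace_eq_span_range {V : Type*} (D : V → V → Prop) :
    rootRowSpace D = Submodule.span (ZMod 2)
      (Set.range fun u : {v : V // ∀ w, ¬ D w v} => rowVec D u.1) := by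
  rw [rootRowSpace]
  congr 1
  ext f
  constructor
  · rintro ⟨u, hu, rfl⟩
    exact ⟨⟨u, hu⟩, rfl⟩
  · rintro ⟨u, rfl⟩
    exact ⟨u.1, u.2, rfl⟩

theorem rank_eq_card_roots_general {V : Type*} [Fintype V]
    (hcard : 2 ≤ Fintype.card V) (D : V → V → Prop)
    (hind : IndecompD D) :
    Module.finrank (ZMod 2) ↥(rootRowSpace D) =
      Nat.card {v : V // ∀ w, ¬ D w v} := by
  classical
  rw [rootRowSpace_eq_span_range, finrank_span_eq_card (linearIndependent_rowVec_roots hcard hind),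
    Nat.card_eq_fintype_card]

/-- If `D` is an indecomposable acyclic digraph with at least two vertices,
then the `𝔽₂`-rank of `A_D[L₀(D), V∖L₀(D)]` equals the number of roots. -/
theorem rank_eq_card_roots {V : Type*} [Fintype V]
    (hcard : 2 ≤ Fintype.card V) (D : V → V → Prop)
    (hac : AcyclicRel D) (hind : IndecompD D) :
    Module.finrank (ZMod 2) ↥(rootRowSpace D) =
      Nat.card {v : V // ∀ w, ¬ D w v} :=
  rank_eq_card_roots_general hcard D hind
end

section
/- If D and H are Bott equivalent acyclic digraphs, then |L_k(D)| = |L_k(H)| for every nonnegative integer k; in particular, Bott equivalent acyclic digraphs have the identical type (|L₀|, |L₁|, |L₂|, …). -/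
/-- There is a directed path with exactly `k` arcs ending at `v`. -/
def EndPath {V : Type*} (R : V → V → Prop) (k : ℕ) (v : V) : Prop :=
  ∃ f : Fin (k + 1) → V, Function.Injective f ∧ f (Fin.last k) = v ∧
    ∀ i : Fin k, R (f i.castSucc) (f i.succ)

/-- The `k`-th level set `L_k(D)`: vertices `v` such that a longest directed
path ending at `v` has exactly `k` arcs. -/
def levelSet {V : Type*} (R : V → V → Prop) (k : ℕ) : Set V :=
  {v | EndPath R k v ∧ ∀ m : ℕ, k < m → ¬ EndPath R m v}

/-!
In an acyclic digraph every walk is a path, so `L_k` consists of the vertices at which the longest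
walk ending there has exactly `k` arcs. An arc `x → y` created by a local complementation at `v`
comes with arcs `x → v → y` before the move, and an arc `v → y` created by a slide comes with an
arc `u → y`, where `u` has the same in-neighbours as `v`; so every walk after a move can be
lengthened to a walk before it ending at the same vertex. Both moves preserve acyclicity and are
involutions on loopless digraphs, so the comparison runs both ways and the longest walk ending at
each vertex keeps its length.
-/

open Relation Function

section

variable {V W : Type*} {R R' : V → V → Prop} {S : W → W → Prop} {k : ℕ}

/-- A walk with `k` arcs ending at the given vertex: unlike `EndPath`, vertices may repeat. -/
inductive EndWalk (R : V → V → Prop) : ℕ → V → Prop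
  | nil (v : V) : EndWalk R 0 v
  | cons {k : ℕ} {x v : V} : EndWalk R k x → R x v → EndWalk R (k + 1) v

namespace EndWalk

theorem of_arcs : ∀ {k : ℕ} {f : Fin (k + 1) → V},
    (∀ i : Fin k, R (f i.castSucc) (f i.succ)) → EndWalk R k (f (Fin.last k))
  | 0, _, _ => .nil _
  | _ + 1, f, h =>
    .cons (of_arcs (f := f ∘ Fin.castSucc) fun i => by
        simpa only [comp_apply, Fin.succ_castSucc] using h i.castSucc)
      (by simpa using h (Fin.last _))

theorem exists_arcs {v : V} (h : EndWalk R k v) :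
    ∃ f : Fin (k + 1) → V, f (Fin.last k) = v ∧ ∀ i : Fin k, R (f i.castSucc) (f i.succ) := by
  induction h with
  | nil v => exact ⟨fun _ => v, rfl, fun i => i.elim0⟩
  | @cons k x v _ hxv ih =>
    obtain ⟨f, hlast, harc⟩ := ih
    refine ⟨Fin.snoc f v, Fin.snoc_last _ _, fun i => ?_⟩
    induction i using Fin.lastCases with
    | last => simpa [Fin.succ_last, hlast] using hxv
    | cast j => simpa only [Fin.succ_castSucc, Fin.snoc_castSucc] using harc j

theorem of_forall_rel_iff {u v : V} (hN : ∀ w, R w u ↔ R w v) (h : EndWalk R k v) :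
    EndWalk R k u := by
  cases h with
  | nil => exact .nil u
  | cons hw hwv => exact .cons hw ((hN _).2 hwv)

end EndWalk

theorem AcyclicRel.irrefl (hR : AcyclicRel R) (v : V) : ¬ R v v :=
  fun hv => hR v (.single hv)

theorem AcyclicRel.injective_of_arcs (hR : AcyclicRel R) {f : Fin (k + 1) → V}
    (harc : ∀ i : Fin k, R (f i.castSucc) (f i.succ)) : Injective f := by
  have hlt : ∀ ⦃i j⦄, i < j → TransGen R (f i) (f j) :=
    (Fin.liftFun_iff_succ (TransGen R)).2 fun i => .single (harc i)
  intro i j hf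
  by_contra hij
  rcases lt_or_gt_of_ne hij with hij | hij
  · exact hR (f i) (by simpa [hf] using hlt hij)
  · exact hR (f j) (by simpa [hf] using hlt hij)

theorem endPath_iff_endWalk (hR : AcyclicRel R) {v : V} : EndPath R k v ↔ EndWalk R k v := by
  constructor
  · rintro ⟨f, -, rfl, harc⟩
    exact .of_arcs harc
  · intro h
    obtain ⟨f, hlast, harc⟩ := h.exists_arcs
    exact ⟨f, hR.injective_of_arcs harc, hlast, harc⟩

theorem levelSet_eq_setOf_endWalk (hR : AcyclicRel R) (k : ℕ) :
    levelSet R k = {v | EndWalk R k v ∧ ∀ m, k < m → ¬ EndWalk R m v} := by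
  simp only [levelSet, endPath_iff_endWalk hR]

/-- Every walk in `R` can be lengthened to a walk in `R'` with the same last vertex. -/
def WalksDominatedBy (R R' : V → V → Prop) : Prop :=
  ∀ ⦃k : ℕ⦄ ⦃v : V⦄, EndWalk R k v → ∃ m, k ≤ m ∧ EndWalk R' m v

theorem levelSet_subset_of_walksDominatedBy (hR : AcyclicRel R) (hR' : AcyclicRel R')
    (h : WalksDominatedBy R R') (h' : WalksDominatedBy R' R) (k : ℕ) :
    levelSet R k ⊆ levelSet R' k := by
  rw [levelSet_eq_setOf_endWalk hR, levelSet_eq_setOf_endWalk hR']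
  rintro v ⟨hk, hmax⟩
  have hmax' : ∀ m, k < m → ¬ EndWalk R' m v := fun m hkm hm =>
    let ⟨m', hmm', hm'⟩ := h' hm
    hmax m' (hkm.trans_le hmm') hm'
  obtain ⟨m, hkm, hm⟩ := h hk
  rcases hkm.eq_or_lt with rfl | hlt
  · exact ⟨hm, hmax'⟩
  · exact absurd hm (hmax' m hlt)

theorem walksDominatedBy_localComp (R : V → V → Prop) (v : V) :
    WalksDominatedBy (localComp R v) R := by
  intro k w hw
  induction hw with
  | nil w => exact ⟨0, le_rfl, .nil w⟩
  | cons _ hxw ih =>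
    obtain ⟨m, hkm, hm⟩ := ih
    rcases hxw with ⟨hxw, -⟩ | ⟨⟨hxv, hvw⟩, -⟩
    · exact ⟨m + 1, by omega, hm.cons hxw⟩
    · exact ⟨m + 2, by omega, (hm.cons hxv).cons hvw⟩

theorem walksDominatedBy_slideRel {u v : V} (hN : ∀ w, R w u ↔ R w v) :
    WalksDominatedBy (slideRel R u v) R := by
  intro k w hw
  induction hw with
  | nil w => exact ⟨0, le_rfl, .nil w⟩
  | cons _ hxw ih =>
    obtain ⟨m, hkm, hm⟩ := ih
    rcases hxw with ⟨hxw, -⟩ | ⟨⟨rfl, huw⟩, -⟩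
    · exact ⟨m + 1, by omega, hm.cons hxw⟩
    · exact ⟨m + 1, by omega, (hm.of_forall_rel_iff hN).cons huw⟩

theorem acyclicRel_localComp (hR : AcyclicRel R) (v : V) : AcyclicRel (localComp R v) := by
  refine fun c hc => hR c (TransGen.closed (fun x y hxy => ?_) c c hc)
  rcases hxy with ⟨hxy, -⟩ | ⟨⟨hxv, hvy⟩, -⟩
  · exact .single hxy
  · exact .tail (.single hxv) hvy

theorem acyclicRel_slideRel (hR : AcyclicRel R) {u v : V} (hN : ∀ w, R w u ↔ R w v) :
    AcyclicRel (slideRel R u v) := by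
  have to_u : ∀ {x}, TransGen R x v → TransGen R x u := fun h =>
    let ⟨w, hxw, hwv⟩ := TransGen.tail'_iff.mp h
    .tail' hxw ((hN w).2 hwv)
  -- a new arc `v → y` is entered through some `w → v`, and `w → u → y` is an old route
  have reroute : ∀ {x y}, TransGen (slideRel R u v) x y →
      TransGen R x y ∨ (x = v ∧ TransGen R u y) := by
    intro x y hxy
    induction hxy with
    | single hxy =>
      rcases hxy with ⟨hxy, -⟩ | ⟨⟨rfl, huy⟩, -⟩
      · exact .inl (.single hxy)
      · exact .inr ⟨rfl, .single huy⟩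
    | tail _ hbc ih =>
      rcases hbc with ⟨hbc, -⟩ | ⟨⟨rfl, huc⟩, -⟩
      · exact ih.imp (·.tail hbc) (And.imp_right (·.tail hbc))
      · rcases ih with h | ⟨-, h⟩
        · exact .inl ((to_u h).tail huc)
        · exact (hR u (to_u h)).elim
  intro c hc
  rcases reroute hc with h | ⟨rfl, h⟩
  · exact hR c h
  · exact hR u (to_u h)

theorem localComp_apply {v x y : V} : localComp R v x y ↔ Xor (R x y) (R x v ∧ R v y) := Iff.rfl

theorem slideRel_apply {u v x y : V} : slideRel R u v x y ↔ Xor (R x y) (x = v ∧ R u y) := Iff.rfl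

theorem localComp_localComp {v : V} (hv : ¬ R v v) : localComp (localComp R v) v = R := by
  funext x y
  simp only [localComp_apply, xor_def, hv, and_false, eq_iff_iff]
  tauto

theorem slideRel_slideRel {u v : V} (huv : u ≠ v) : slideRel (slideRel R u v) u v = R := by
  funext x y
  simp only [slideRel_apply, xor_def, huv, false_and, eq_iff_iff]
  tauto

namespace GStep

theorem acyclicRel (h : GStep R R') (hR : AcyclicRel R) : AcyclicRel R' := by
  cases h with
  | lc v => exact acyclicRel_localComp hR v
  | sl u v _ hN => exact acyclicRel_slideRel hR hN

theorem walksDominatedBy (h : GStep R R') : WalksDominatedBy R' R := by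
  cases h with
  | lc v => exact walksDominatedBy_localComp R v
  | sl u v _ hN => exact walksDominatedBy_slideRel hN

theorem reverse (hR : ∀ v, ¬ R v v) (h : GStep R R') : GStep R' R := by
  cases h with
  | lc v =>
    have h := GStep.lc (localComp R v) v
    rwa [localComp_localComp (hR v)] at h
  | sl u v huv hN =>
    have hN' : ∀ w, slideRel R u v w u ↔ slideRel R u v w v := by
      intro w
      have := hN u
      simp only [slideRel_apply, xor_def, hN w, hR u]
      tauto
    have h := GStep.sl _ u v huv hN'
    rwa [slideRel_slideRel huv] at h

theorem levelSet_eq (h : GStep R R') (hR : AcyclicRel R) (k : ℕ) :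
    levelSet R' k = levelSet R k := by
  have hR' := h.acyclicRel hR
  have h' := h.reverse hR.irrefl
  exact Set.Subset.antisymm
    (levelSet_subset_of_walksDominatedBy hR' hR h.walksDominatedBy h'.walksDominatedBy k)
    (levelSet_subset_of_walksDominatedBy hR hR' h'.walksDominatedBy h.walksDominatedBy k)

end GStep

theorem acyclicRel_of_reflTransGen (hR : AcyclicRel R) (h : ReflTransGen GStep R R') :
    AcyclicRel R' := by
  induction h with
  | refl => exact hR
  | tail _ hstep ih => exact hstep.acyclicRel ih

theorem levelSet_eq_of_reflTransGen (hR : AcyclicRel R) (h : ReflTransGen GStep R R') (k : ℕ) :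
    levelSet R' k = levelSet R k := by
  induction h with
  | refl => rfl
  | tail hchain hstep ih =>
    exact (hstep.levelSet_eq (acyclicRel_of_reflTransGen hR hchain) k).trans ih

theorem EndPath.map (f : R ↪r S) {v : V} (h : EndPath R k v) : EndPath S k (f v) := by
  obtain ⟨g, hg, rfl, harc⟩ := h
  exact ⟨f ∘ g, f.injective.comp hg, rfl, fun i => f.map_rel_iff.2 (harc i)⟩

theorem RelIso.endPath_apply_iff (e : R ≃r S) {v : V} : EndPath S k (e v) ↔ EndPath R k v :=
  ⟨fun h => by simpa using h.map e.symm.toRelEmbedding, fun h => h.map e.toRelEmbedding⟩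

theorem card_levelSet_eq_of_relIso (e : R ≃r S) (k : ℕ) :
    Nat.card (levelSet R k) = Nat.card (levelSet S k) :=
  Nat.card_congr <| e.toEquiv.subtypeEquiv fun _ =>
    and_congr e.endPath_apply_iff.symm (forall₂_congr fun _ _ => not_congr e.endPath_apply_iff.symm)

end

theorem levelSet_card_invariant_general {V W : Type*}
    (R : V → V → Prop) (S : W → W → Prop)
    (hR : AcyclicRel R) (h : BottEquivD R S) :
    ∀ k : ℕ, Nat.card ↥(levelSet R k) = Nat.card ↥(levelSet S k) := by
  obtain ⟨R', hchain, e, he⟩ := h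
  intro k
  rw [← levelSet_eq_of_reflTransGen hR hchain k]
  exact card_levelSet_eq_of_relIso ⟨e, (he _ _).symm⟩ k

/-- Bott equivalent acyclic digraphs have the same level set sizes, hence the
identical type `(|L₀|, |L₁|, |L₂|, …)`. -/
theorem levelSet_card_invariant {V W : Type*} [Fintype V] [Fintype W]
    (R : V → V → Prop) (S : W → W → Prop)
    (hR : AcyclicRel R) (hS : AcyclicRel S) (h : BottEquivD R S) :
    ∀ k : ℕ, Nat.card ↥(levelSet R k) = Nat.card ↥(levelSet S k) :=
  levelSet_card_invariant_general R S hR h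
end

section
/- If Bott matrices A, B ∈ 𝔅(n) are Bott equivalent, then they have the same rank over 𝔽₂: rank A = rank B. -/
open Matrix

/-- (Op1) conjugation by a permutation matrix. -/
def PhiP {n : ℕ} (σ : Equiv.Perm (Fin n)) (A : Matrix (Fin n) (Fin n) (ZMod 2)) :
    Matrix (Fin n) (Fin n) (ZMod 2) :=
  σ.permMatrix (ZMod 2) * A * (σ⁻¹).permMatrix (ZMod 2)

/-- (Op3) `Φ^{ℓ,m}(A)`: add the `ℓ`-th row to the `m`-th row. -/
def Phi3 {n : ℕ} (l m : Fin n) (A : Matrix (Fin n) (Fin n) (ZMod 2)) :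
    Matrix (Fin n) (Fin n) (ZMod 2) :=
  fun i j => if i = m then A l j + A m j else A i j

/-- One application of one of the operations (Op1), (Op2), (Op3). -/
inductive BottStep {n : ℕ} :
    Matrix (Fin n) (Fin n) (ZMod 2) → Matrix (Fin n) (Fin n) (ZMod 2) → Prop
  | op1 (σ : Equiv.Perm (Fin n)) (A) : BottStep A (PhiP σ A)
  | op2 (k : Fin n) (A) : BottStep A (Phi2 k A)
  | op3 (l m : Fin n) (A) (h : l ≠ m) (hc : ∀ i, A i l = A i m) :
      BottStep A (Phi3 l m A)

/-- Bott equivalence: a finite sequence of the operations (Op1)--(Op3). -/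
def BottEquivM {n : ℕ} (A B : Matrix (Fin n) (Fin n) (ZMod 2)) : Prop :=
  Relation.ReflTransGen BottStep A B

/-!
Rank is invariant under (Op1), a simultaneous permutation of rows and columns, and under (Op3),
left multiplication by the invertible `1 + E_{mℓ}`. For (Op2), `Φ_k(A) = A (1 + E_{kk} A)` and
`(E_{kk} A)² = A^k_k E_{kk} A`, so `1 + E_{kk} A` is invertible as soon as `A^k_k = 0`.
So it suffices that every matrix Bott equivalent to a Bott matrix has zero diagonal. This follows
from a stronger invariant: the digraph with an edge `i → j` whenever `A^i_j ≠ 0` admits a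
strictly increasing height function. Bott matrices have one; (Op1) and (Op2) keep it (a new edge
`i → j` of `Φ_k(A)` comes from a path `i → k → j`), and for (Op3) the height of `m` is lowered
to `min (h ℓ) (h m)`, which works because the columns `ℓ` and `m` agree.
-/

def IsAcyclic {ι R : Type*} [Zero R] (A : Matrix ι ι R) : Prop :=
  ∃ h : ι → ℕ, ∀ i j, A i j ≠ 0 → h i < h j

theorem IsAcyclic.diag_eq_zero {ι R : Type*} [Zero R] {A : Matrix ι ι R} (hA : IsAcyclic A)
    (i : ι) : A i i = 0 := by
  obtain ⟨h, hh⟩ := hA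
  by_contra hi
  exact lt_irrefl _ (hh i i hi)

theorem Matrix.isUnit_det_one_add_of_mul_self_eq_zero {ι R : Type*} [Fintype ι] [DecidableEq ι]
    [CommRing R] {N : Matrix ι ι R} (hN : N * N = 0) : IsUnit (1 + N).det :=
  (isUnit_iff_isUnit_det _).mp (IsNilpotent.isUnit_one_add ⟨2, by rw [sq, hN]⟩)

variable {n : ℕ}

theorem phiP_eq_submatrix (σ : Equiv.Perm (Fin n)) (A : Matrix (Fin n) (Fin n) (ZMod 2)) :
    PhiP σ A = A.submatrix σ σ := by
  unfold PhiP Equiv.Perm.permMatrix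
  rw [PEquiv.toMatrix_toPEquiv_mul, PEquiv.mul_toMatrix_toPEquiv]
  ext i j
  simp [Equiv.Perm.inv_def]

theorem phi2_eq_mul (k : Fin n) (A : Matrix (Fin n) (Fin n) (ZMod 2)) :
    Phi2 k A = A * (1 + single k k 1 * A) := by
  ext i j
  rw [mul_add, mul_one, ← Matrix.mul_assoc]
  simp [Phi2, mul_apply, single_apply, ite_and, mul_comm]

theorem phi3_eq_mul (l m : Fin n) (A : Matrix (Fin n) (Fin n) (ZMod 2)) :
    Phi3 l m A = (1 + single m l 1) * A := by
  ext i j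
  by_cases him : i = m
  · subst him
    simp [Phi3, add_mul, add_comm]
  · simp [Phi3, add_mul, him]

theorem rank_phiP (σ : Equiv.Perm (Fin n)) (A : Matrix (Fin n) (Fin n) (ZMod 2)) :
    (PhiP σ A).rank = A.rank := by
  rw [phiP_eq_submatrix, rank_submatrix]

theorem rank_phi2 (k : Fin n) {A : Matrix (Fin n) (Fin n) (ZMod 2)} (hkk : A k k = 0) :
    (Phi2 k A).rank = A.rank := by
  have hsq : single k k 1 * A * (single k k 1 * A) = 0 := by
    rw [← Matrix.mul_assoc, single_mul_mul_single, hkk, mul_zero, zero_mul, single_zero,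
      Matrix.zero_mul]
  rw [phi2_eq_mul]
  exact rank_mul_eq_left_of_isUnit_det _ _ (isUnit_det_one_add_of_mul_self_eq_zero hsq)

theorem rank_phi3 {l m : Fin n} (hlm : l ≠ m) (A : Matrix (Fin n) (Fin n) (ZMod 2)) :
    (Phi3 l m A).rank = A.rank := by
  have hsq : single m l (1 : ZMod 2) * single m l 1 = 0 := single_mul_single_of_ne _ _ _ _ hlm _
  rw [phi3_eq_mul]
  exact rank_mul_eq_right_of_isUnit_det _ _ (isUnit_det_one_add_of_mul_self_eq_zero hsq)

theorem IsBott.isAcyclic {A : Matrix (Fin n) (Fin n) (ZMod 2)} (hA : IsBott A) : IsAcyclic A := by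
  obtain ⟨σ, B, hB, rfl⟩ := hA
  refine ⟨fun i => σ i, fun i j hij => ?_⟩
  rw [← PhiP, phiP_eq_submatrix, submatrix_apply] at hij
  exact lt_of_not_ge fun hle => hij (hB _ _ hle)

theorem IsAcyclic.phiP (σ : Equiv.Perm (Fin n)) {A : Matrix (Fin n) (Fin n) (ZMod 2)}
    (hA : IsAcyclic A) : IsAcyclic (PhiP σ A) := by
  obtain ⟨h, hh⟩ := hA
  refine ⟨h ∘ σ, fun i j hij => ?_⟩
  rw [phiP_eq_submatrix] at hij
  exact hh _ _ hij

theorem IsAcyclic.phi2 (k : Fin n) {A : Matrix (Fin n) (Fin n) (ZMod 2)} (hA : IsAcyclic A) :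
    IsAcyclic (Phi2 k A) := by
  obtain ⟨h, hh⟩ := hA
  refine ⟨h, fun i j hij => ?_⟩
  by_cases hAij : A i j = 0
  · have hpath : A k j ≠ 0 ∧ A i k ≠ 0 := by
      simpa [Phi2, hAij, not_or] using hij
    exact (hh _ _ hpath.2).trans (hh _ _ hpath.1)
  · exact hh _ _ hAij

theorem IsAcyclic.phi3 {l m : Fin n} {A : Matrix (Fin n) (Fin n) (ZMod 2)}
    (hc : ∀ i, A i l = A i m) (hA : IsAcyclic A) : IsAcyclic (Phi3 l m A) := by
  have hdiag := hA.diag_eq_zero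
  obtain ⟨h, hh⟩ := hA
  refine ⟨Function.update h m (min (h l) (h m)), fun i j hij => ?_⟩
  by_cases him : i = m <;> by_cases hjm : j = m
  · subst him hjm
    simp only [Phi3, if_true] at hij
    rw [← hc, hdiag, hdiag, add_zero] at hij
    exact absurd rfl hij
  · subst him
    have hout : A l j ≠ 0 ∨ A i j ≠ 0 := by
      by_contra! hzero
      simp [Phi3, hzero] at hij
    simp only [Function.update_self, Function.update_of_ne hjm]
    rcases hout with hout | hout
    · exact (min_le_left _ _).trans_lt (hh _ _ hout)
    · exact (min_le_right _ _).trans_lt (hh _ _ hout)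
  · subst hjm
    simp only [Phi3, if_neg him] at hij
    simp only [Function.update_self, Function.update_of_ne him]
    exact lt_min (hh _ _ (hc i ▸ hij)) (hh _ _ hij)
  · simp only [Phi3, if_neg him] at hij
    simp only [Function.update_of_ne him, Function.update_of_ne hjm]
    exact hh _ _ hij

theorem BottStep.isAcyclic {A B : Matrix (Fin n) (Fin n) (ZMod 2)} (h : BottStep A B)
    (hA : IsAcyclic A) : IsAcyclic B := by
  cases h with
  | op1 σ => exact hA.phiP σ
  | op2 k => exact hA.phi2 k
  | op3 l m _ _ hc => exact hA.phi3 hc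

theorem BottStep.rank_eq {A B : Matrix (Fin n) (Fin n) (ZMod 2)} (h : BottStep A B)
    (hA : IsAcyclic A) : B.rank = A.rank := by
  cases h with
  | op1 σ => exact rank_phiP σ A
  | op2 k => exact rank_phi2 k (hA.diag_eq_zero k)
  | op3 l m _ hlm => exact rank_phi3 hlm A

theorem BottEquivM.isAcyclic {A B : Matrix (Fin n) (Fin n) (ZMod 2)} (h : BottEquivM A B)
    (hA : IsAcyclic A) : IsAcyclic B := by
  induction h with
  | refl => exact hA
  | tail _ hstep ih => exact hstep.isAcyclic ih

theorem rank_bottEquiv_invariant_general {n : ℕ}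
    (A B : Matrix (Fin n) (Fin n) (ZMod 2)) (hA : IsBott A)
    (h : BottEquivM A B) : A.rank = B.rank := by
  induction h with
  | refl => rfl
  | tail hAX hstep ih =>
    exact ih.trans (hstep.rank_eq (BottEquivM.isAcyclic hAX hA.isAcyclic)).symm

/-- Bott equivalent Bott matrices have the same rank over `𝔽₂`. -/
theorem rank_bottEquiv_invariant {n : ℕ}
    (A B : Matrix (Fin n) (Fin n) (ZMod 2)) (hA : IsBott A) (hB : IsBott B)
    (h : BottEquivM A B) : A.rank = B.rank :=
  rank_bottEquiv_invariant_general A B hA h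
end
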